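/- arXiv:1510.07473 — 7 statements merged into one kernel-verified Lean document; each statement's English description precedes it below -/
import Mathlib

section
/- If μ* is an upper quasi-density on ℕ, then μ*(X) = 0 for every finite subset X of ℕ. -/
/-- `k·X + h = {k*x + h : x ∈ X}` -/
def affImage (k h : ℕ) (X : Set ℕ) : Set ℕ := (fun x => k * x + h) '' X

/-!
Subadditivity alone gives `μ* ≥ 0`, because `μ*(X) = μ*(X ∪ X) ≤ 2 μ*(X)`, and it bounds `μ*` of a
finite set by the sum over its singletons. By (F4♭), `μ*({1}) = μ*(1·{0}+1) = μ*({0})` and also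
`μ*({1}) = μ*(2·{0}+1) = μ*({0})/2`, so `μ*({0}) = 0`; translating `{0}` then kills every singleton,
and `μ*(∅) = μ*(2·∅+1) = μ*(∅)/2` kills the empty set.
-/

section Subadditive

variable {α : Type*} {μ : Set α → ℝ}

theorem nonneg_of_subadditive (hsub : ∀ X Y : Set α, μ (X ∪ Y) ≤ μ X + μ Y) (X : Set α) :
    0 ≤ μ X := by
  have h := hsub X X
  rw [Set.union_self] at h
  linarith

theorem Set.Finite.le_zero_of_subadditive (hsub : ∀ X Y : Set α, μ (X ∪ Y) ≤ μ X + μ Y)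
    (hempty : μ ∅ ≤ 0) (hsingleton : ∀ a, μ {a} ≤ 0) {X : Set α} (hX : X.Finite) : μ X ≤ 0 := by
  induction X, hX using Set.Finite.induction_on with
  | empty => exact hempty
  | @insert a s _ _ ih =>
    calc μ (insert a s) ≤ μ {a} + μ s := Set.singleton_union ▸ hsub {a} s
      _ ≤ 0 := by linarith [hsingleton a]

end Subadditive

@[simp]
theorem affImage_empty (k h : ℕ) : affImage k h ∅ = ∅ :=
  Set.image_empty _

@[simp]
theorem affImage_singleton_zero (k h : ℕ) : affImage k h {0} = {h} := by
  simp [affImage]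

section Dilation

variable {μ : Set ℕ → ℝ}
  (hdil : ∀ (X : Set ℕ) (h k : ℕ), 0 < h → 0 < k → μ (affImage k h X) = (1 / (k : ℝ)) * μ X)
include hdil

theorem empty_eq_zero_of_dilation : μ ∅ = 0 := by
  have h := hdil ∅ 1 2 one_pos two_pos
  rw [affImage_empty] at h
  linarith

theorem singleton_zero_eq_zero_of_dilation : μ {0} = 0 := by
  have h₁ := hdil {0} 1 1 one_pos one_pos
  have h₂ := hdil {0} 1 2 one_pos two_pos
  rw [affImage_singleton_zero] at h₁ h₂
  linarith

theorem singleton_eq_zero_of_dilation (n : ℕ) : μ {n} = 0 := by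
  obtain rfl | hn := Nat.eq_zero_or_pos n
  · exact singleton_zero_eq_zero_of_dilation hdil
  · simpa [singleton_zero_eq_zero_of_dilation hdil] using hdil {0} n 1 hn one_pos

end Dilation

theorem stmt3_general (μ : Set ℕ → ℝ)
    (h3 : ∀ X Y : Set ℕ, μ (X ∪ Y) ≤ μ X + μ Y)
    (h4 : ∀ (X : Set ℕ) (h k : ℕ), 0 < h → 0 < k →
      μ (affImage k h X) = (1 / (k : ℝ)) * μ X) :
    ∀ X : Set ℕ, X.Finite → μ X = 0 := by
  intro X hX
  refine le_antisymm ?_ (nonneg_of_subadditive h3 X)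
  exact hX.le_zero_of_subadditive h3 (empty_eq_zero_of_dilation h4).le
    fun n => (singleton_eq_zero_of_dilation h4 n).le

theorem stmt3 (μ : Set ℕ → ℝ)
    (h1 : μ Set.univ = 1)
    (h2 : ∀ X : Set ℕ, μ X ≤ 1)
    (h3 : ∀ X Y : Set ℕ, μ (X ∪ Y) ≤ μ X + μ Y)
    (h4 : ∀ (X : Set ℕ) (h k : ℕ), 0 < h → 0 < k →
      μ (affImage k h X) = (1 / (k : ℝ)) * μ X) :
    ∀ X : Set ℕ, X.Finite → μ X = 0 :=
  stmt3_general μ h3 h4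
end

section
/- Let μ* be an upper quasi-density on ℕ, let k be a positive integer, and let h₁, …, hₙ be nonnegative integers that are pairwise incongruent modulo k. Set ℋ := {h₁, …, hₙ} and V := ⋃_{h ∈ ℋ} (k·ℕ + h). Then μ*(V ∪ F) = n/k for every finite subset F of ℕ. -/
open Finset

lemma mem_affImage_univ_iff {k h m : ℕ} :
    m ∈ affImage k h Set.univ ↔ h ≤ m ∧ m % k = h % k := by
  constructor
  · rintro ⟨x, -, rfl⟩
    exact ⟨Nat.le_add_left _ _, Nat.mul_add_mod k x h⟩
  · rintro ⟨hle, hmod⟩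
    obtain ⟨c, hc⟩ := (Nat.modEq_iff_dvd' hle).mp hmod.symm
    exact ⟨c, trivial, by dsimp only; omega⟩

lemma affImage_univ_eq_insert (k h : ℕ) :
    affImage k h Set.univ = insert h (affImage k (h + k) Set.univ) := by
  ext m
  simp only [affImage, Set.image_univ, Set.mem_range, Set.mem_insert_iff]
  constructor
  · rintro ⟨_ | x, rfl⟩
    · simp
    · exact Or.inr ⟨x, by ring⟩
  · rintro (rfl | ⟨x, rfl⟩)
    · exact ⟨0, by simp⟩
    · exact ⟨x + 1, by ring⟩

lemma iUnion_affImage_univ_eq {ι : Type*} (k : ℕ) (h : ι → ℕ) :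
    ⋃ i, affImage k (h i) Set.univ = (⋃ i, affImage k (h i + k) Set.univ) ∪ Set.range h := by
  rw [Set.iUnion_congr fun i => affImage_univ_eq_insert k (h i)]
  simp only [Set.insert_eq, Set.iUnion_union_distrib, Set.iUnion_singleton_eq_range]
  exact Set.union_comm _ _

lemma compl_Iio_subset_iUnion_affImage_union {ι : Type*} [Fintype ι] {k : ℕ} (hk : 0 < k)
    (h : ι → ℕ) :
    (Set.Iio (k + ∑ i, h i))ᶜ ⊆ (⋃ i, affImage k (h i) Set.univ) ∪
      ⋃ r ∈ range k \ univ.image (h · % k), affImage k (r + k) Set.univ := by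
  intro m hm
  simp only [Set.mem_compl_iff, Set.mem_Iio, not_lt] at hm
  by_cases hr : m % k ∈ univ.image (h · % k)
  · obtain ⟨i, -, hi⟩ := mem_image.mp hr
    have : h i ≤ ∑ j, h j := single_le_sum (fun j _ => Nat.zero_le (h j)) (mem_univ i)
    exact Or.inl (Set.mem_iUnion.mpr ⟨i, mem_affImage_univ_iff.mpr ⟨by omega, hi.symm⟩⟩)
  · have : m % k + k ≤ m := by
      have := Nat.mod_le (m - k) k
      rw [← Nat.mod_eq_sub_mod (by omega)] at this
      omega
    have hS : m % k ∈ range k \ univ.image (h · % k) :=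
      mem_sdiff.mpr ⟨mem_range.mpr (Nat.mod_lt m hk), hr⟩
    refine Or.inr (Set.mem_biUnion hS (mem_affImage_univ_iff.mpr ⟨by omega, ?_⟩))
    rw [Nat.add_mod_right, Nat.mod_mod]

namespace UpperQuasiDensity

variable {μ : Set ℕ → ℝ}

def IsSubadditive (μ : Set ℕ → ℝ) : Prop := ∀ X Y : Set ℕ, μ (X ∪ Y) ≤ μ X + μ Y

def IsAffineScaling (μ : Set ℕ → ℝ) : Prop :=
  ∀ (X : Set ℕ) (h k : ℕ), 0 < h → 0 < k → μ (affImage k h X) = (1 / (k : ℝ)) * μ X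

lemma nonneg (hsub : IsSubadditive μ) (X : Set ℕ) : 0 ≤ μ X := by
  have := hsub X X
  rw [Set.union_self] at this
  linarith

lemma singleton_eq_zero (haff : IsAffineScaling μ) (a : ℕ) : μ {a} = 0 := by
  have shift : ∀ b, μ {b + 1} = μ {0} := fun b => by
    simpa [affImage] using haff {0} (b + 1) 1 b.succ_pos one_pos
  have halve : μ {1} = 1 / 2 * μ {0} := by
    simpa [affImage] using haff {0} 1 2 one_pos two_pos
  have h0 : μ {0} = 0 := by linarith [shift 0]
  cases a with
  | zero => exact h0
  | succ b => rw [shift, h0]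

lemma finite_eq_zero (hsub : IsSubadditive μ) (haff : IsAffineScaling μ) {G : Set ℕ}
    (hG : G.Finite) : μ G = 0 := by
  refine le_antisymm ?_ (nonneg hsub G)
  induction G, hG using Set.Finite.induction_on with
  | empty =>
    have := haff ∅ 1 2 one_pos two_pos
    simp only [affImage, Set.image_empty] at this
    linarith
  | @insert a s _ _ ih =>
    rw [Set.insert_eq]
    linarith [hsub {a} s, singleton_eq_zero haff a]

lemma union_finite_le (hsub : IsSubadditive μ) (haff : IsAffineScaling μ) (X : Set ℕ)
    {G : Set ℕ} (hG : G.Finite) : μ (X ∪ G) ≤ μ X := by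
  linarith [hsub X G, finite_eq_zero hsub haff hG]

lemma one_sub_le_of_compl_subset_union (huniv : μ Set.univ = 1) (hsub : IsSubadditive μ)
    (haff : IsAffineScaling μ) {X Y G : Set ℕ} (hG : G.Finite) (hcover : Gᶜ ⊆ X ∪ Y) :
    1 - μ Y ≤ μ X := by
  have hunion : G ∪ (X ∪ Y) = Set.univ := Set.compl_subset_iff_union.mp hcover
  have := hsub G (X ∪ Y)
  rw [hunion, huniv, finite_eq_zero hsub haff hG] at this
  linarith [hsub X Y]

lemma biUnion_affImage_univ_le (huniv : μ Set.univ = 1) (hsub : IsSubadditive μ)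
    (haff : IsAffineScaling μ) {k : ℕ} (hk : 0 < k) {ι : Type*} (s : Finset ι) (a : ι → ℕ)
    (ha : ∀ i ∈ s, 0 < a i) :
    μ (⋃ i ∈ s, affImage k (a i) Set.univ) ≤ #s / k := by
  have hempty : μ ∅ = 0 := finite_eq_zero hsub haff Set.finite_empty
  calc μ (⋃ i ∈ s, affImage k (a i) Set.univ)
      ≤ ∑ i ∈ s, μ (affImage k (a i) Set.univ) := apply_union_le_sum hempty (hsub _ _) s
    _ = ∑ i ∈ s, 1 / (k : ℝ) := sum_congr rfl fun i hi => by
        rw [haff _ _ _ (ha i hi) hk, huniv, mul_one]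
    _ = #s / k := by rw [sum_const, nsmul_eq_mul, mul_one_div]

end UpperQuasiDensity

open UpperQuasiDensity

theorem stmt6_general (μ : Set ℕ → ℝ)
    (h1 : μ Set.univ = 1)
    (h3 : ∀ X Y : Set ℕ, μ (X ∪ Y) ≤ μ X + μ Y)
    (h4 : ∀ (X : Set ℕ) (h k : ℕ), 0 < h → 0 < k →
      μ (affImage k h X) = (1 / (k : ℝ)) * μ X)
    (k : ℕ) (hk : 0 < k) (n : ℕ) (h : Fin n → ℕ)
    (hinc : ∀ i j : Fin n, i ≠ j → h i % k ≠ h j % k) :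
    ∀ F : Set ℕ, F.Finite →
      μ ((⋃ i : Fin n, affImage k (h i) Set.univ) ∪ F) = (n : ℝ) / k := by
  intro F hF
  have hres : #(univ.image (h · % k)) = n := by
    rw [card_image_of_injective _ fun i j hij => by_contra fun hne => hinc i j hne hij,
      card_univ, Fintype.card_fin]
  have hcard := card_sdiff_add_card_eq_card (s := univ.image (h · % k))
    (image_subset_iff.mpr fun i _ => mem_range.mpr (Nat.mod_lt (h i) hk))
  set S := range k \ univ.image (h · % k)
  rw [hres, card_range] at hcard
  apply le_antisymm
  · rw [iUnion_affImage_univ_eq, Set.union_assoc]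
    refine (union_finite_le h3 h4 _ ((Set.finite_range h).union hF)).trans ?_
    simpa using biUnion_affImage_univ_le h1 h3 h4 hk univ (h · + k) fun i _ => by omega
  · have hlow := one_sub_le_of_compl_subset_union h1 h3 h4 (Set.finite_Iio _)
      ((compl_Iio_subset_iUnion_affImage_union hk h).trans
        (Set.union_subset_union_left _ (Set.subset_union_left (t := F))))
    have hrest := biUnion_affImage_univ_le h1 h3 h4 hk S (· + k) fun r _ => by omega
    have hk' : (0 : ℝ) < k := by exact_mod_cast hk
    have hS : (#S : ℝ) = k - n := by rw [← hcard, Nat.cast_add, add_sub_cancel_right]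
    calc (n : ℝ) / k = 1 - #S / k := by rw [hS]; field_simp; ring
      _ ≤ _ := by linarith

theorem stmt6 (μ : Set ℕ → ℝ)
    (h1 : μ Set.univ = 1)
    (h2 : ∀ X : Set ℕ, μ X ≤ 1)
    (h3 : ∀ X Y : Set ℕ, μ (X ∪ Y) ≤ μ X + μ Y)
    (h4 : ∀ (X : Set ℕ) (h k : ℕ), 0 < h → 0 < k →
      μ (affImage k h X) = (1 / (k : ℝ)) * μ X)
    (k : ℕ) (hk : 0 < k) (n : ℕ) (h : Fin n → ℕ)
    (hinc : ∀ i j : Fin n, i ≠ j → h i % k ≠ h j % k) :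
    ∀ F : Set ℕ, F.Finite →
      μ ((⋃ i : Fin n, affImage k (h i) Set.univ) ∪ F) = (n : ℝ) / k :=
  stmt6_general μ h1 h3 h4 k hk n h hinc
end

section
/- Let f : 𝒫(S) → ℝ be a function with the weak Darboux property (for every X ⊆ S and every a ∈ [f(∅), f(X)] there exists A ⊆ X with f(A) = a). Then f(X) ≤ f(∅) for every finite X ⊆ S. -/
open Set

theorem le_of_Icc_subset_of_finite {α : Type*} [LinearOrder α] [DenselyOrdered α] {a b : α}
    {s : Set α} (hs : s.Finite) (h : Icc a b ⊆ s) : b ≤ a :=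
  not_lt.1 fun hab => Icc_infinite hab (hs.subset h)

theorem stmt11 {S : Type*} (f : Set S → ℝ)
    (hD : ∀ X : Set S, ∀ a : ℝ, f ∅ ≤ a → a ≤ f X →
      ∃ A : Set S, A ⊆ X ∧ f A = a) :
    ∀ X : Set S, X.Finite → f X ≤ f ∅ := by
  intro X hX
  have hIcc : Icc (f ∅) (f X) ⊆ f '' 𝒫 X := fun a ha => hD X a ha.1 ha.2
  exact le_of_Icc_subset_of_finite (hX.finite_subsets.image f) hIcc
end

section
/- Let μ* be an upper quasi-density on ℕ, let A ⊆ B ⊆ ℕ with μ*(A) < μ*(B), and let a, b be reals with μ*(A) ≤ a < b ≤ μ*(B). Then for every integer k > 1/(b − a) there exist a set ℋ₀ ⊆ {0, 1, …, k−1} and an element h₀ ∈ {0, 1, …, k−1} such that a < μ*(A ∪ (B ∩ V_{k,ℋ₀})) < b ≤ μ*(A ∪ (B ∩ V_{k, ℋ₀ ∪ {h₀}})), where V_{k,ℋ} := ⋃_{h ∈ ℋ}(k·ℕ + h). -/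
/-- `V_{k,H} = ⋃_{h ∈ H} (k·ℕ + h)`. -/
def progressionUnion (k : ℕ) (H : Set ℕ) : Set ℕ := ⋃ h ∈ H, affImage k h Set.univ

lemma mem_affImage_univ {k h n : ℕ} : n ∈ affImage k h Set.univ ↔ ∃ m, k * m + h = n := by
  simp [affImage]

lemma progressionUnion_Iio_self {k : ℕ} (hk : 0 < k) : progressionUnion k (Set.Iio k) = Set.univ :=
  Set.eq_univ_of_forall fun n => Set.mem_biUnion (Nat.mod_lt n hk)
    (mem_affImage_univ.2 ⟨n / k, Nat.div_add_mod n k⟩)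

lemma progressionUnion_union_singleton (k : ℕ) (H : Set ℕ) (h : ℕ) :
    progressionUnion k (H ∪ {h}) = progressionUnion k H ∪ affImage k h Set.univ := by
  simp only [progressionUnion, Set.biUnion_union, Set.biUnion_singleton]

lemma exists_lt_le_succ_of_lt_of_le {α : Type*} [LinearOrder α] {g : ℕ → α} {b : α} (h0 : g 0 < b) :
    ∀ {n : ℕ}, b ≤ g n → ∃ m < n, g m < b ∧ b ≤ g (m + 1)
  | 0, hn => absurd hn h0.not_ge
  | n + 1, hn => by
    rcases lt_or_ge (g n) b with hlt | hle
    · exact ⟨n, n.lt_succ_self, hlt, hn⟩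
    · obtain ⟨m, hm, hm'⟩ := exists_lt_le_succ_of_lt_of_le h0 hle
      exact ⟨m, hm.trans n.lt_succ_self, hm'⟩

section QuasiDensity

def UnionSubadditive (μ : Set ℕ → ℝ) : Prop := ∀ X Y : Set ℕ, μ (X ∪ Y) ≤ μ X + μ Y

def ScalesUnderAffImage (μ : Set ℕ → ℝ) : Prop :=
  ∀ (X : Set ℕ) (h k : ℕ), 0 < h → 0 < k → μ (affImage k h X) = (1 / (k : ℝ)) * μ X

variable {μ : Set ℕ → ℝ}

lemma measure_empty_eq_zero (hscale : ScalesUnderAffImage μ) : μ ∅ = 0 := by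
  have := hscale ∅ 1 2 one_pos two_pos
  simp only [affImage, Set.image_empty] at this
  linarith

lemma measure_eq_zero_of_subset_singleton_zero (hscale : ScalesUnderAffImage μ)
    {S : Set ℕ} (hS : S ⊆ {0}) : μ S = 0 := by
  rcases Set.subset_singleton_iff_eq.1 hS with rfl | rfl
  · exact measure_empty_eq_zero hscale
  · -- `{1}` is both `1·{0} + 1` and `2·{0} + 1`
    have h₁ := hscale {0} 1 1 one_pos one_pos
    have h₂ := hscale {0} 1 2 one_pos two_pos
    simp only [affImage, Set.image_singleton] at h₁ h₂
    norm_num at h₁ h₂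
    linarith

lemma measure_le_of_subset_affImage (hle_one : ∀ X : Set ℕ, μ X ≤ 1)
    (hscale : ScalesUnderAffImage μ)
    {X : Set ℕ} {h k : ℕ} (hh : 0 < h) (hk : 0 < k) (hX : X ⊆ affImage k h Set.univ) :
    μ X ≤ 1 / k := by
  have hX' : affImage k h ((fun x => k * x + h) ⁻¹' X) = X := by
    rw [affImage, Set.image_preimage_eq_of_subset]
    simpa [affImage] using hX
  calc μ X = 1 / k * μ ((fun x => k * x + h) ⁻¹' X) := by rw [← hscale _ h k hh hk, hX']
    _ ≤ 1 / k * 1 := by gcongr; exact hle_one _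
    _ = 1 / k := mul_one _

lemma measure_inter_affImage_le (hle_one : ∀ X : Set ℕ, μ X ≤ 1)
    (hsub : UnionSubadditive μ) (hscale : ScalesUnderAffImage μ)
    (X : Set ℕ) (h : ℕ) {k : ℕ} (hk : 0 < k) : μ (X ∩ affImage k h Set.univ) ≤ 1 / k := by
  rcases Nat.eq_zero_or_pos h with rfl | hh
  · set S := X ∩ affImage k 0 Set.univ
    have hS : S \ {0} ⊆ affImage k k Set.univ := by
      rintro _ ⟨⟨-, hn⟩, hn0⟩
      obtain ⟨_ | m, rfl⟩ := mem_affImage_univ.1 hn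
      · simp at hn0
      · exact mem_affImage_univ.2 ⟨m, by ring⟩
    calc μ S = μ (S ∩ {0} ∪ S \ {0}) := by rw [Set.inter_union_sdiff]
      _ ≤ μ (S ∩ {0}) + μ (S \ {0}) := hsub _ _
      _ ≤ 0 + 1 / k := by
        rw [measure_eq_zero_of_subset_singleton_zero hscale Set.inter_subset_right]
        gcongr
        exact measure_le_of_subset_affImage hle_one hscale hk hk hS
      _ = 1 / k := zero_add _
  · exact measure_le_of_subset_affImage hle_one hscale hh hk Set.inter_subset_right

lemma measure_union_inter_progressionUnion_union_singleton_le (hle_one : ∀ X : Set ℕ, μ X ≤ 1)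
    (hsub : UnionSubadditive μ) (hscale : ScalesUnderAffImage μ)
    (A B H : Set ℕ) (h : ℕ) {k : ℕ} (hk : 0 < k) :
    μ (A ∪ (B ∩ progressionUnion k (H ∪ {h}))) ≤ μ (A ∪ (B ∩ progressionUnion k H)) + 1 / k := by
  calc μ (A ∪ (B ∩ progressionUnion k (H ∪ {h})))
      = μ ((A ∪ (B ∩ progressionUnion k H)) ∪ (B ∩ affImage k h Set.univ)) := by
        rw [progressionUnion_union_singleton, Set.inter_union_distrib_left, Set.union_assoc]
    _ ≤ _ := (hsub _ _).trans <|
      add_le_add le_rfl (measure_inter_affImage_le hle_one hsub hscale B h hk)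

end QuasiDensity

theorem stmt12_general (μ : Set ℕ → ℝ)
    (h2 : ∀ X : Set ℕ, μ X ≤ 1)
    (h3 : ∀ X Y : Set ℕ, μ (X ∪ Y) ≤ μ X + μ Y)
    (h4 : ∀ (X : Set ℕ) (h k : ℕ), 0 < h → 0 < k →
      μ (affImage k h X) = (1 / (k : ℝ)) * μ X)
    (A B : Set ℕ) (hAB : A ⊆ B)
    (a b : ℝ) (ha : μ A ≤ a) (hab : a < b) (hb : b ≤ μ B) :
    ∀ k : ℕ, (1 / (b - a) : ℝ) < k →
      ∃ H0 ⊆ Set.Iio k, ∃ h0 ∈ Set.Iio k,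
        a < μ (A ∪ (B ∩ ⋃ h ∈ H0, affImage k h Set.univ)) ∧
        μ (A ∪ (B ∩ ⋃ h ∈ H0, affImage k h Set.univ)) < b ∧
        b ≤ μ (A ∪ (B ∩ ⋃ h ∈ (H0 ∪ {h0}), affImage k h Set.univ)) := by
  intro k hk
  have hba : 0 < b - a := sub_pos.2 hab
  have hkR : (0 : ℝ) < k := (one_div_pos.2 hba).trans hk
  have hk0 : 0 < k := by exact_mod_cast hkR
  have hstep : 1 / (k : ℝ) < b - a := (one_div_lt hba hkR).1 hk
  set g : ℕ → ℝ := fun j => μ (A ∪ (B ∩ progressionUnion k (Set.Iio j)))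
  have hg0 : g 0 = μ A := by simp [g, progressionUnion]
  have hgk : g k = μ B := by
    simp only [g, progressionUnion_Iio_self hk0, Set.inter_univ, Set.union_eq_right.2 hAB]
  obtain ⟨m, hmk, hgm, hgm'⟩ :=
    exists_lt_le_succ_of_lt_of_le (hg0.trans_le ha |>.trans_lt hab) (hgk ▸ hb : b ≤ g k)
  have hIio : Set.Iio (m + 1) = Set.Iio m ∪ {m} := by
    rw [Set.union_singleton, ← Order.Iio_succ_eq_insert, Order.succ_eq_add_one]
  have hle : g (m + 1) ≤ g m + 1 / k := by
    simpa only [g, hIio] using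
      measure_union_inter_progressionUnion_union_singleton_le h2 h3 h4 A B (Set.Iio m) m hk0
  refine ⟨Set.Iio m, fun x hx => hx.trans hmk, m, hmk, show a < g m by linarith, hgm, ?_⟩
  show b ≤ μ (A ∪ (B ∩ progressionUnion k (Set.Iio m ∪ {m})))
  rwa [← hIio]

theorem stmt12 (μ : Set ℕ → ℝ)
    (h1 : μ Set.univ = 1)
    (h2 : ∀ X : Set ℕ, μ X ≤ 1)
    (h3 : ∀ X Y : Set ℕ, μ (X ∪ Y) ≤ μ X + μ Y)
    (h4 : ∀ (X : Set ℕ) (h k : ℕ), 0 < h → 0 < k →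
      μ (affImage k h X) = (1 / (k : ℝ)) * μ X)
    (A B : Set ℕ) (hAB : A ⊆ B) (hlt : μ A < μ B)
    (a b : ℝ) (ha : μ A ≤ a) (hab : a < b) (hb : b ≤ μ B) :
    ∀ k : ℕ, (1 / (b - a) : ℝ) < k →
      ∃ H0 ⊆ Set.Iio k, ∃ h0 ∈ Set.Iio k,
        a < μ (A ∪ (B ∩ ⋃ h ∈ H0, affImage k h Set.univ)) ∧
        μ (A ∪ (B ∩ ⋃ h ∈ H0, affImage k h Set.univ)) < b ∧
        b ≤ μ (A ∪ (B ∩ ⋃ h ∈ (H0 ∪ {h0}), affImage k h Set.univ)) :=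
  stmt12_general μ h2 h3 h4 A B hAB a b ha hab hb
end

section
/- If μ* is an upper quasi-density on ℕ, then the image of μ* is the entire interval [0,1]: for every a ∈ [0,1] there exists X ⊆ ℕ with μ*(X) = a. -/
def digitSet (d : ℕ → Fin 2) : Set ℕ := {x | d (padicValNat 2 (x + 1)) = 1}

lemma digitSet_eq (d : ℕ → Fin 2) :
    digitSet d = {x | Even x ∧ d 0 = 1} ∪ affImage 2 1 (digitSet fun i => d (i + 1)) := by
  ext x
  obtain ⟨m, rfl | rfl⟩ := Nat.even_or_odd' x
  · have hv : padicValNat 2 (2 * m + 1) = 0 := padicValNat.eq_zero_of_not_dvd (by omega)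
    simp only [digitSet, affImage, hv, Set.mem_ofPred_eq, Set.mem_union, Set.mem_image,
      even_two, Even.mul_right, true_and, iff_self_or, forall_exists_index, and_imp]
    omega
  · have hv : padicValNat 2 (2 * m + 1 + 1) = padicValNat 2 (m + 1) + 1 :=
      padicValNat_base_mul one_lt_two m.succ_ne_zero
    simp [digitSet, affImage, hv]

lemma compl_digitSet (d : ℕ → Fin 2) : (digitSet d)ᶜ = digitSet fun i => (d i).rev := by
  ext x
  simp only [digitSet, Set.mem_compl_iff, Set.mem_ofPred_eq]
  generalize d _ = c
  fin_cases c <;> decide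

lemma Real.ofDigits_add_ofDigits_rev {b : ℕ} [NeZero b] (d : ℕ → Fin (b + 1)) :
    Real.ofDigits d + Real.ofDigits (fun i => (d i).rev) = 1 := by
  rw [← Real.ofDigits_const_last_eq_one b, Real.ofDigits, Real.ofDigits, Real.ofDigits,
    ← Summable.tsum_add Real.summable_ofDigitsTerm Real.summable_ofDigitsTerm]
  congr with i
  simp only [Real.ofDigitsTerm, ← add_mul, Fin.val_rev, Fin.val_last]
  congr 1
  push_cast [Nat.cast_sub (d i).is_le]
  ring

structure IsUpperQuasiDensity (μ : Set ℕ → ℝ) : Prop where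
  apply_univ : μ Set.univ = 1
  le_one : ∀ X, μ X ≤ 1
  union_le : ∀ X Y, μ (X ∪ Y) ≤ μ X + μ Y
  apply_affImage : ∀ X h k, 0 < h → 0 < k → μ (affImage k h X) = (1 / (k : ℝ)) * μ X

namespace IsUpperQuasiDensity

variable {μ : Set ℕ → ℝ} (hμ : IsUpperQuasiDensity μ)
include hμ

lemma apply_empty : μ ∅ = 0 := by
  have := hμ.apply_affImage ∅ 1 2 one_pos two_pos
  simp only [affImage, Set.image_empty] at this
  linarith

-- `1·{0} + 1` and `2·{0} + 1` are both `{1}`, so `μ {0} = μ {0} / 2`.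
lemma apply_singleton_zero : μ {0} = 0 := by
  have h1 := hμ.apply_affImage {0} 1 1 one_pos one_pos
  have h2 := hμ.apply_affImage {0} 1 2 one_pos two_pos
  simp only [affImage, Set.image_singleton] at h1 h2
  norm_num at h1 h2
  linarith

lemma apply_setOf_even_le : μ {x | Even x} ≤ 1 / 2 := by
  have h_even : {x : ℕ | Even x} = {0} ∪ affImage 2 2 Set.univ := by
    ext x
    obtain ⟨m, rfl | rfl⟩ := Nat.even_or_odd' x
    · rcases m with _ | m
      · simp
      · simpa [affImage] using ⟨m, by ring⟩
    · simp only [affImage, Set.image_univ, Set.mem_range, Set.mem_union, Set.mem_singleton_iff,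
        Set.mem_ofPred_eq, Nat.not_even_bit1, false_iff, not_or]
      omega
  calc μ {x | Even x} ≤ μ {0} + μ (affImage 2 2 Set.univ) := h_even ▸ hμ.union_le _ _
    _ = 1 / 2 := by
      rw [hμ.apply_singleton_zero, hμ.apply_affImage _ 2 2 two_pos two_pos, hμ.apply_univ]
      norm_num

lemma apply_digitSet_le_add (d : ℕ → Fin 2) (n : ℕ) :
    μ (digitSet d) ≤ Real.ofDigits d + (2⁻¹ : ℝ) ^ n := by
  induction n generalizing d with
  | zero => simpa using (hμ.le_one _).trans (le_add_of_nonneg_left (Real.ofDigits_nonneg d))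
  | succ n ih =>
    have h_head : μ {x | Even x ∧ d 0 = 1} ≤ Real.ofDigitsTerm d 0 := by
      rcases Fin.exists_fin_two.mp ⟨d 0, rfl⟩ with h | h
      · simp [Real.ofDigitsTerm, h, hμ.apply_empty]
      · simpa [Real.ofDigitsTerm, h] using hμ.apply_setOf_even_le
    have h_split := Real.ofDigits_eq_sum_add_ofDigits d 1
    simp only [Finset.sum_range_one, Nat.cast_ofNat, pow_one] at h_split
    have h_tail := hμ.apply_affImage (digitSet fun i => d (i + 1)) 1 2 one_pos two_pos
    calc μ (digitSet d)
        ≤ μ {x | Even x ∧ d 0 = 1} + μ (affImage 2 1 (digitSet fun i => d (i + 1))) := by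
          rw [digitSet_eq]; exact hμ.union_le _ _
      _ ≤ Real.ofDigitsTerm d 0 + 2⁻¹ * (Real.ofDigits (fun i => d (i + 1)) + 2⁻¹ ^ n) := by
          have := ih fun i => d (i + 1); rw [h_tail]; push_cast; linarith
      _ = Real.ofDigits d + 2⁻¹ ^ (n + 1) := by rw [h_split]; ring

lemma apply_digitSet_le (d : ℕ → Fin 2) : μ (digitSet d) ≤ Real.ofDigits d := by
  have h_lim : Filter.Tendsto (fun n : ℕ => Real.ofDigits d + (2⁻¹ : ℝ) ^ n) Filter.atTop
      (nhds (Real.ofDigits d)) := by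
    simpa using tendsto_const_nhds.add (tendsto_pow_atTop_nhds_zero_of_lt_one (by norm_num)
      (by norm_num : (2⁻¹ : ℝ) < 1))
  exact ge_of_tendsto' h_lim (hμ.apply_digitSet_le_add d)

lemma apply_digitSet (d : ℕ → Fin 2) : μ (digitSet d) = Real.ofDigits d := by
  refine le_antisymm (hμ.apply_digitSet_le d) ?_
  have h_univ := hμ.union_le (digitSet d) (digitSet d)ᶜ
  rw [Set.union_compl_self, hμ.apply_univ, compl_digitSet] at h_univ
  linarith [hμ.apply_digitSet_le fun i => (d i).rev, Real.ofDigits_add_ofDigits_rev d]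

end IsUpperQuasiDensity

theorem stmt15 (μ : Set ℕ → ℝ)
    (h1 : μ Set.univ = 1)
    (h2 : ∀ X : Set ℕ, μ X ≤ 1)
    (h3 : ∀ X Y : Set ℕ, μ (X ∪ Y) ≤ μ X + μ Y)
    (h4 : ∀ (X : Set ℕ) (h k : ℕ), 0 < h → 0 < k →
      μ (affImage k h X) = (1 / (k : ℝ)) * μ X) :
    ∀ a : ℝ, a ∈ Set.Icc (0 : ℝ) 1 → ∃ X : Set ℕ, μ X = a := by
  intro a ha
  obtain ⟨d, -, rfl⟩ := Real.ofDigits_SurjOn one_lt_two ha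
  exact ⟨digitSet d, IsUpperQuasiDensity.apply_digitSet ⟨h1, h2, h3, h4⟩ d⟩
end

section
/- If μ* is an upper quasi-density on ℕ, then for every X ⊆ ℕ and every a ∈ [0, μ*(X)] there is a subset A ⊆ X with μ*(A) = a (the weak Darboux property). -/
/-!
Greedy binary splitting. Split `X` along residue classes modulo `2, 4, 8, …`: at step `n` the
current class modulo `2ⁿ` splits into two classes modulo `2ⁿ⁺¹`, and the first of them is added
to the set under construction exactly when that keeps its value `≤ a`. Every subset of a residue
class modulo `k` has value at most `1/k` (translate by `k`, then contract by `k`), so by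
subadditivity the value of the limit set is within `2⁻ⁿ` of `a` for every `n`.
-/

open Filter Topology

theorem Nat.modEq_iff_modEq_two_mul_or {m x r : ℕ} :
    x ≡ r [MOD m] ↔ x ≡ r [MOD 2 * m] ∨ x ≡ r + m [MOD 2 * m] := by
  constructor
  · intro h
    obtain ⟨q, hq⟩ := Nat.modEq_iff_dvd.1 h
    rcases Int.even_or_odd q with ⟨t, rfl⟩ | ⟨t, rfl⟩
    · exact .inl (Nat.modEq_iff_dvd.2 ⟨t, by push_cast; linear_combination hq⟩)
    · exact .inr (Nat.modEq_iff_dvd.2 ⟨t + 1, by push_cast; linear_combination hq⟩)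
  · rintro (h | h)
    · exact h.of_mul_left 2
    · exact (h.of_mul_left 2).trans (Nat.add_modEq_left_iff.2 dvd_rfl)

theorem map_iUnion_eq_of_squeeze {α : Type*} (μ : Set α → ℝ)
    (hsub : ∀ X Y : Set α, μ (X ∪ Y) ≤ μ X + μ Y) {A R : ℕ → Set α} {a : ℝ} {ε : ℕ → ℝ}
    (hA : ∀ n, A n ⊆ A (n + 1)) (hAR : ∀ n, A (n + 1) ⊆ A n ∪ R n) (hR : ∀ n, R (n + 1) ⊆ R n)
    (hlow : ∀ n, μ (A n) ≤ a) (hhigh : ∀ n, a ≤ μ (A n ∪ R n))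
    (hsmall : ∀ n, ∀ S ⊆ R n, μ S ≤ ε n) (hε : Tendsto ε atTop (𝓝 0)) :
    μ (⋃ n, A n) = a := by
  have hAmono : Monotone A := monotone_nat_of_le_succ hA
  have hRanti : Antitone R := antitone_nat_of_succ_le hR
  have hcover : ∀ n, (⋃ m, A m) ⊆ A n ∪ R n := by
    refine fun n => Set.iUnion_subset fun m => ?_
    rcases le_total m n with hmn | hnm
    · exact (hAmono hmn).trans Set.subset_union_left
    · induction m, hnm using Nat.le_induction with
      | base => exact Set.subset_union_left
      | succ m hnm ih =>
        exact (hAR m).trans (Set.union_subset ih ((hRanti hnm).trans Set.subset_union_right))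
  have hU : ∀ n, μ (⋃ m, A m) ≤ a + ε n := fun n => by
    have hle := hsub (A n) ((⋃ m, A m) \ A n)
    rw [Set.union_sdiff_cancel (Set.subset_iUnion A n)] at hle
    linarith [hlow n, hsmall n _ (Set.sdiff_subset_iff.2 (hcover n))]
  have hL : ∀ n, a ≤ μ (⋃ m, A m) + ε n := fun n => by
    have hle := hsub (⋃ m, A m) ((A n ∪ R n) \ ⋃ m, A m)
    rw [Set.union_sdiff_cancel (hcover n)] at hle
    have hrest : (A n ∪ R n) \ ⋃ m, A m ⊆ R n :=
      Set.sdiff_subset_iff.2 (Set.union_subset_union_left _ (Set.subset_iUnion A n))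
    linarith [hhigh n, hsmall n _ hrest]
  have htendsto : ∀ c : ℝ, Tendsto (fun n => c + ε n) atTop (𝓝 c) := fun c => by
    simpa using hε.const_add c
  exact le_antisymm (ge_of_tendsto' (htendsto a) hU) (ge_of_tendsto' (htendsto _) hL)

section UpperQuasiDensity

variable {μ : Set ℕ → ℝ}

theorem map_le_one_div_of_forall_modEq (hle : ∀ X : Set ℕ, μ X ≤ 1)
    (hscale : ∀ (X : Set ℕ) (h k : ℕ), 0 < h → 0 < k → μ (affImage k h X) = (1 / (k : ℝ)) * μ X)
    {S : Set ℕ} {k r : ℕ} (hk : 0 < k) (hS : ∀ x ∈ S, x ≡ r [MOD k]) :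
    μ S ≤ 1 / (k : ℝ) := by
  have hshift : affImage 1 k S = affImage k (r % k + k) ((· / k) '' S) := by
    rw [affImage, affImage, Set.image_image]
    refine Set.image_congr fun x hx => ?_
    have hx' : k * (x / k) + r % k = x := (hS x hx) ▸ Nat.div_add_mod x k
    omega
  calc μ S = μ (affImage 1 k S) := by simp [hscale S k 1 hk one_pos]
    _ = 1 / (k : ℝ) * μ ((· / k) '' S) := by rw [hshift, hscale _ _ _ (by omega) hk]
    _ ≤ 1 / (k : ℝ) * 1 := by gcongr; exact hle _
    _ = 1 / (k : ℝ) := mul_one _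

theorem map_empty_nonpos (hle : ∀ X : Set ℕ, μ X ≤ 1)
    (hscale : ∀ (X : Set ℕ) (h k : ℕ), 0 < h → 0 < k → μ (affImage k h X) = (1 / (k : ℝ)) * μ X) :
    μ ∅ ≤ 0 := by
  refine ge_of_tendsto' tendsto_one_div_add_atTop_nhds_zero_nat fun n => ?_
  exact_mod_cast map_le_one_div_of_forall_modEq (r := 0) hle hscale n.succ_pos (by simp)

end UpperQuasiDensity

section GreedyCut

variable (μ : Set ℕ → ℝ) (a : ℝ) (X : Set ℕ)

/-- The pair `(Aₙ, rₙ)`: the set built so far and the residue modulo `2ⁿ` still to be split. -/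
noncomputable def greedyCut : ℕ → Set ℕ × ℕ
  | 0 => (∅, 0)
  | n + 1 =>
    let s := greedyCut n
    let P := X ∩ {x | x ≡ s.2 [MOD 2 ^ (n + 1)]}
    open Classical in if μ (s.1 ∪ P) ≤ a then (s.1 ∪ P, s.2 + 2 ^ n) else s

def greedyRest (n : ℕ) : Set ℕ := X ∩ {x | x ≡ (greedyCut μ a X n).2 [MOD 2 ^ n]}

theorem greedyRest_eq_union (n : ℕ) :
    greedyRest μ a X n = X ∩ {x | x ≡ (greedyCut μ a X n).2 [MOD 2 ^ (n + 1)]} ∪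
      X ∩ {x | x ≡ (greedyCut μ a X n).2 + 2 ^ n [MOD 2 ^ (n + 1)]} := by
  ext x
  simp only [greedyRest, Set.mem_union, Set.mem_inter_iff, Set.mem_ofPred_eq, ← and_or_left]
  rw [pow_succ', ← Nat.modEq_iff_modEq_two_mul_or]

theorem greedyCut_succ (n : ℕ) :
    let s := greedyCut μ a X n
    let P := X ∩ {x | x ≡ s.2 [MOD 2 ^ (n + 1)]}
    let Q := X ∩ {x | x ≡ s.2 + 2 ^ n [MOD 2 ^ (n + 1)]}
    (μ (s.1 ∪ P) ≤ a ∧ (greedyCut μ a X (n + 1)).1 = s.1 ∪ P ∧ greedyRest μ a X (n + 1) = Q) ∨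
      (a < μ (s.1 ∪ P) ∧ (greedyCut μ a X (n + 1)).1 = s.1 ∧ greedyRest μ a X (n + 1) = P) := by
  intro s P Q
  by_cases h : μ (s.1 ∪ P) ≤ a
  · exact .inl ⟨h, by simp [greedyCut, s, P, h], by simp [greedyRest, greedyCut, s, P, Q, h]⟩
  · exact .inr ⟨not_le.1 h, by simp [greedyCut, s, P, h], by simp [greedyRest, greedyCut, s, P, h]⟩

theorem greedyCut_subset_succ (n : ℕ) :
    (greedyCut μ a X n).1 ⊆ (greedyCut μ a X (n + 1)).1 := by
  rcases greedyCut_succ μ a X n with ⟨-, hA, -⟩ | ⟨-, hA, -⟩ <;> rw [hA]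
  exact Set.subset_union_left

theorem greedyCut_succ_subset (n : ℕ) :
    (greedyCut μ a X (n + 1)).1 ⊆ (greedyCut μ a X n).1 ∪ greedyRest μ a X n := by
  rw [greedyRest_eq_union]
  rcases greedyCut_succ μ a X n with ⟨-, hA, -⟩ | ⟨-, hA, -⟩ <;> rw [hA]
  · exact Set.union_subset_union_right _ Set.subset_union_left
  · exact Set.subset_union_left

theorem greedyRest_succ_subset (n : ℕ) : greedyRest μ a X (n + 1) ⊆ greedyRest μ a X n := by
  rw [greedyRest_eq_union μ a X n]
  rcases greedyCut_succ μ a X n with ⟨-, -, hR⟩ | ⟨-, -, hR⟩ <;> rw [hR]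
  · exact Set.subset_union_right
  · exact Set.subset_union_left

theorem greedyCut_subset (n : ℕ) : (greedyCut μ a X n).1 ⊆ X := by
  induction n with
  | zero => exact Set.empty_subset X
  | succ n ih =>
    exact (greedyCut_succ_subset μ a X n).trans (Set.union_subset ih Set.inter_subset_left)

theorem map_greedyCut_le (h0 : μ ∅ ≤ a) (n : ℕ) : μ (greedyCut μ a X n).1 ≤ a := by
  induction n with
  | zero => exact h0
  | succ n ih =>
    rcases greedyCut_succ μ a X n with ⟨hle, hA, -⟩ | ⟨-, hA, -⟩ <;> rw [hA]
    · exact hle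
    · exact ih

theorem le_map_greedyCut_union (hX : a ≤ μ X) (n : ℕ) :
    a ≤ μ ((greedyCut μ a X n).1 ∪ greedyRest μ a X n) := by
  induction n with
  | zero => simpa [greedyCut, greedyRest, Nat.modEq_one] using hX
  | succ n ih =>
    rcases greedyCut_succ μ a X n with ⟨-, hA, hR⟩ | ⟨hlt, hA, hR⟩ <;> rw [hA, hR]
    · rwa [Set.union_assoc, ← greedyRest_eq_union]
    · exact hlt.le

end GreedyCut

theorem stmt16_general (μ : Set ℕ → ℝ)
    (h2 : ∀ X : Set ℕ, μ X ≤ 1)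
    (h3 : ∀ X Y : Set ℕ, μ (X ∪ Y) ≤ μ X + μ Y)
    (h4 : ∀ (X : Set ℕ) (h k : ℕ), 0 < h → 0 < k →
      μ (affImage k h X) = (1 / (k : ℝ)) * μ X) :
    ∀ X : Set ℕ, ∀ a : ℝ, 0 ≤ a → a ≤ μ X →
      ∃ A : Set ℕ, A ⊆ X ∧ μ A = a := by
  intro X a ha haX
  have hsmall : ∀ n, ∀ S ⊆ greedyRest μ a X n, μ S ≤ 1 / ((2 ^ n : ℕ) : ℝ) := fun n S hS =>
    map_le_one_div_of_forall_modEq h2 h4 (by positivity) fun x hx => (hS hx).2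
  have hε : Tendsto (fun n => 1 / ((2 ^ n : ℕ) : ℝ)) atTop (𝓝 0) := by
    simpa [Function.comp_def] using
      tendsto_inv_atTop_zero.comp (tendsto_pow_atTop_atTop_of_one_lt one_lt_two)
  refine ⟨⋃ n, (greedyCut μ a X n).1, Set.iUnion_subset (greedyCut_subset μ a X), ?_⟩
  exact map_iUnion_eq_of_squeeze μ h3 (greedyCut_subset_succ μ a X) (greedyCut_succ_subset μ a X)
    (greedyRest_succ_subset μ a X) (map_greedyCut_le μ a X ((map_empty_nonpos h2 h4).trans ha))
    (le_map_greedyCut_union μ a X haX) hsmall hε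

theorem stmt16 (μ : Set ℕ → ℝ)
    (h1 : μ Set.univ = 1)
    (h2 : ∀ X : Set ℕ, μ X ≤ 1)
    (h3 : ∀ X Y : Set ℕ, μ (X ∪ Y) ≤ μ X + μ Y)
    (h4 : ∀ (X : Set ℕ) (h k : ℕ), 0 < h → 0 < k →
      μ (affImage k h X) = (1 / (k : ℝ)) * μ X) :
    ∀ X : Set ℕ, ∀ a : ℝ, 0 ≤ a → a ≤ μ X →
      ∃ A : Set ℕ, A ⊆ X ∧ μ A = a :=
  stmt16_general μ h2 h3 h4
end

section
/- Define f : 𝒫(ℕ) → ℝ by f(X) := 1/min(X ∩ ℕ⁺) if X ∩ ℕ⁺ ≠ ∅, and f(X) := 0 otherwise. Then f satisfies: f(ℕ) = 1; f is monotone; f(X ∪ Y) ≤ f(X) + f(Y) for all X, Y ⊆ ℕ; f(k·X) = (1/k)·f(X) for all X ⊆ ℕ and positive integers k; and the image of f equals {0} ∪ {1/k : k ∈ ℕ⁺}. -/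
/-!
The least positive element of `X ∪ Y` is the smaller of those of `X` and `Y`, so
`minFun (X ∪ Y) = max (minFun X) (minFun Y)`, which gives monotonicity and subadditivity.
Dilation by `k` multiplies the least positive element by `k`.
-/

/-- `f X = 1/min(X ∩ ℕ⁺)` if `X ∩ ℕ⁺ ≠ ∅`, and `0` otherwise (note that
`sInf ∅ = 0` in `ℕ` and `(0 : ℝ)⁻¹ = 0`). -/
noncomputable def minFun (X : Set ℕ) : ℝ := ((sInf {x | x ∈ X ∧ 0 < x} : ℕ) : ℝ)⁻¹

open Set

section minFun

variable {X Y : Set ℕ}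

lemma minFun_of_inter_eq_empty (h : X ∩ Ioi 0 = ∅) : minFun X = 0 := by
  change ((sInf (X ∩ Ioi 0) : ℕ) : ℝ)⁻¹ = 0
  simp [h]

lemma minFun_of_isLeast {m : ℕ} (h : IsLeast (X ∩ Ioi 0) m) : minFun X = (m : ℝ)⁻¹ := by
  change ((sInf (X ∩ Ioi 0) : ℕ) : ℝ)⁻¹ = _
  rw [h.csInf_eq]

lemma minFun_nonneg (X : Set ℕ) : 0 ≤ minFun X := by
  unfold minFun
  positivity

lemma inv_le_minFun {x : ℕ} (hx : x ∈ X) (hx0 : 0 < x) : (x : ℝ)⁻¹ ≤ minFun X := by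
  have hmin := isLeast_csInf (s := X ∩ Ioi 0) ⟨x, hx, hx0⟩
  rw [minFun_of_isLeast hmin]
  exact inv_anti₀ (mod_cast hmin.1.2) (mod_cast hmin.2 ⟨hx, hx0⟩)

lemma minFun_mono (h : X ⊆ Y) : minFun X ≤ minFun Y := by
  rcases (X ∩ Ioi 0).eq_empty_or_nonempty with hX | hX
  · rw [minFun_of_inter_eq_empty hX]
    exact minFun_nonneg Y
  · have hmin := isLeast_csInf hX
    rw [minFun_of_isLeast hmin]
    exact inv_le_minFun (h hmin.1.1) hmin.1.2

lemma minFun_union (X Y : Set ℕ) : minFun (X ∪ Y) = max (minFun X) (minFun Y) := by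
  refine le_antisymm ?_ (max_le (minFun_mono subset_union_left) (minFun_mono subset_union_right))
  rcases ((X ∪ Y) ∩ Ioi 0).eq_empty_or_nonempty with hXY | hXY
  · rw [minFun_of_inter_eq_empty hXY]
    exact le_max_of_le_left (minFun_nonneg X)
  · have hmin := isLeast_csInf hXY
    rw [minFun_of_isLeast hmin]
    rcases hmin.1.1 with hX | hY
    · exact le_max_of_le_left (inv_le_minFun hX hmin.1.2)
    · exact le_max_of_le_right (inv_le_minFun hY hmin.1.2)

lemma minFun_union_le (X Y : Set ℕ) : minFun (X ∪ Y) ≤ minFun X + minFun Y := by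
  rw [minFun_union]
  exact max_le_add_of_nonneg (minFun_nonneg X) (minFun_nonneg Y)

lemma minFun_image_mul {k : ℕ} (hk : 0 < k) (X : Set ℕ) :
    minFun ((fun x => k * x) '' X) = (k : ℝ)⁻¹ * minFun X := by
  have hpos : (fun x => k * x) '' X ∩ Ioi 0 = (fun x => k * x) '' (X ∩ Ioi 0) := by
    ext x
    simp only [mem_inter_iff, mem_image, mem_Ioi]
    constructor
    · rintro ⟨⟨y, hy, rfl⟩, hky⟩
      exact ⟨y, ⟨hy, pos_of_mul_pos_right hky k.zero_le⟩, rfl⟩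
    · rintro ⟨y, ⟨hy, hy0⟩, rfl⟩
      exact ⟨⟨y, hy, rfl⟩, Nat.mul_pos hk hy0⟩
  rcases (X ∩ Ioi 0).eq_empty_or_nonempty with hX | hX
  · rw [minFun_of_inter_eq_empty hX, minFun_of_inter_eq_empty (by rw [hpos, hX, image_empty]),
      mul_zero]
  · have hmin := isLeast_csInf hX
    have hkmin : IsLeast ((fun x => k * x) '' X ∩ Ioi 0) (k * sInf (X ∩ Ioi 0)) := by
      rw [hpos]
      exact Monotone.map_isLeast (fun _ _ h => Nat.mul_le_mul_left k h) hmin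
    rw [minFun_of_isLeast hmin, minFun_of_isLeast hkmin, Nat.cast_mul, mul_inv]

lemma minFun_singleton {k : ℕ} (hk : 0 < k) : minFun {k} = (k : ℝ)⁻¹ :=
  minFun_of_isLeast ⟨⟨rfl, hk⟩, fun _ hx => hx.1.ge⟩

lemma range_minFun : range minFun = {0} ∪ {a : ℝ | ∃ k : ℕ, 0 < k ∧ a = (k : ℝ)⁻¹} := by
  ext a
  simp only [mem_range, mem_union, mem_singleton_iff, mem_ofPred_eq]
  constructor
  · rintro ⟨X, rfl⟩
    rcases (X ∩ Ioi 0).eq_empty_or_nonempty with hX | hX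
    · exact Or.inl (minFun_of_inter_eq_empty hX)
    · have hmin := isLeast_csInf hX
      exact Or.inr ⟨_, hmin.1.2, minFun_of_isLeast hmin⟩
  · rintro (rfl | ⟨k, hk, rfl⟩)
    · exact ⟨∅, minFun_of_inter_eq_empty (empty_inter _)⟩
    · exact ⟨{k}, minFun_singleton hk⟩

end minFun

theorem stmt18 :
    minFun Set.univ = 1 ∧
    (∀ X Y : Set ℕ, X ⊆ Y → minFun X ≤ minFun Y) ∧
    (∀ X Y : Set ℕ, minFun (X ∪ Y) ≤ minFun X + minFun Y) ∧
    (∀ (X : Set ℕ) (k : ℕ), 0 < k →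
      minFun ((fun x => k * x) '' X) = (1 / (k : ℝ)) * minFun X) ∧
    Set.range minFun = {0} ∪ {a : ℝ | ∃ k : ℕ, 0 < k ∧ a = 1 / (k : ℝ)} := by
  simp only [one_div]
  refine ⟨?_, fun _ _ => minFun_mono, minFun_union_le,
    fun X _ hk => minFun_image_mul hk X, range_minFun⟩
  simpa using minFun_of_isLeast (X := univ) (m := 1) ⟨⟨trivial, Nat.one_pos⟩, fun _ hx => hx.2⟩
end
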